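/- arXiv:2602.15177 — 2 statements merged into one kernel-verified Lean document; each statement's English description precedes it below -/
import Mathlib

section
/- Fix a tax rate α ∈ [0,1), an initial capital x ∈ ℝ and a strategy N ∈ 𝒩. Then the after-tax terminal wealth never exceeds the frictionless terminal wealth of the same strategy: V^α(x,N) ≤ V^0(x,N) almost surely. -/
open MeasureTheory Filter Finset

noncomputable section
open scoped Classical

/-- Euclidean inner product on `Fin d → ℝ`. -/
def dotp {d : ℕ} (a b : Fin d → ℝ) : ℝ := ∑ j, a j * b j

/-- Euclidean norm on `Fin d → ℝ`. -/
def eucNorm {d : ℕ} (a : Fin d → ℝ) : ℝ := Real.sqrt (∑ j, a j ^ 2)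

/-- Accumulated realized gains and losses `G_t`, given the bank account history `eta`:
`G_t = ∑_{u=1}^t ( η_{u-1} r_u + ∑_{i=0}^{u-1} ⟨N_{i,u-1} - N_{i,u}, S_u - S_i⟩ )`. -/
def Gaux {d : ℕ} (S : ℕ → Fin d → ℝ) (r : ℕ → ℝ) (N : ℕ → ℕ → Fin d → ℝ)
    (eta : ℕ → ℝ) (t : ℕ) : ℝ :=
  ∑ u ∈ Finset.Icc 1 t,
    (eta (u - 1) * r u +
      ∑ i ∈ Finset.range u, dotp (fun j => N i (u - 1) j - N i u j) (fun j => S u j - S i j))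

/-- Limited-use-of-losses tax payments `Π_t = α · max_{0 ≤ u ≤ t} G_u`. -/
def Piaux {d : ℕ} (α : ℝ) (S : ℕ → Fin d → ℝ) (r : ℕ → ℝ) (N : ℕ → ℕ → Fin d → ℝ)
    (eta : ℕ → ℝ) (t : ℕ) : ℝ :=
  α * (Finset.range (t + 1)).sup' Finset.nonempty_range_add_one (fun u => Gaux S r N eta u)

/-- `etaHist α x S r N t` is the bank-account history after trading and taxes, up to time `t`:
for `s ≤ t` it gives `η_s`, and for `s > t` it gives `η_t`.  It is defined by the
self-financing recursion `η_{-1} = x`,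
`η_t - η_{t-1} = r_t η_{t-1} 1_{t ≥ 1} + ⟨∑_{i<t}(N_{i,t-1} - N_{i,t}) - N_{t,t}, S_t⟩
  - (Π_t - Π_{t-1}) 1_{t ≥ 1}`. -/
def etaHist {d : ℕ} (α x : ℝ) (S : ℕ → Fin d → ℝ) (r : ℕ → ℝ)
    (N : ℕ → ℕ → Fin d → ℝ) : ℕ → ℕ → ℝ :=
  Nat.rec (motive := fun _ => ℕ → ℝ)
    (fun _ => x - dotp (fun j => N 0 0 j) (fun j => S 0 j))
    (fun t e => fun s =>
      if s ≤ t then e s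
      else
        e t + r (t + 1) * e t
          + dotp
              (fun j => (∑ i ∈ Finset.range (t + 1), (N i t j - N i (t + 1) j))
                - N (t + 1) (t + 1) j)
              (fun j => S (t + 1) j)
          - (Piaux α S r N e (t + 1) - Piaux α S r N e t))

/-- A discrete-time market with horizon `T`, `d` risky assets, a filtration `F`,
adapted nonnegative-price processes are not required in general, and a nonnegative adapted
interest-rate process `r`. -/
structure Market (Ω : Type*) [m0 : MeasurableSpace Ω] (T d : ℕ) where
  P : Measure Ω
  hProb : IsProbabilityMeasure P
  F : ℕ → MeasurableSpace Ω
  F_le : ∀ t, F t ≤ m0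
  F_mono : Monotone F
  S : ℕ → Ω → Fin d → ℝ
  S_adapted : ∀ t, Measurable[F t] (S t)
  r : ℕ → Ω → ℝ
  r_nonneg : ∀ t ω, 0 ≤ r t ω
  r_adapted : ∀ t, Measurable[F t] (r t)

variable {Ω : Type*} [m0 : MeasurableSpace Ω] {T d : ℕ}

/-- A trading strategy: `N i t ω j` is the number of shares of asset `j` bought at time `i`
and still held after trading at time `t`.  It is `F t`-adapted, nonnegative, nonincreasing
in `t` (for `i ≤ t < T`), forced to liquidate at `T`, and zero before the purchase date. -/
def Market.IsStrategy (M : Market Ω T d) (N : ℕ → ℕ → Ω → Fin d → ℝ) : Prop :=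
  (∀ i t, Measurable[M.F t] (N i t)) ∧
  (∀ i t ω j, 0 ≤ N i t ω j) ∧
  (∀ i t, i ≤ t → t < T → ∀ ω j, N i (t + 1) ω j ≤ N i t ω j) ∧
  (∀ i ω j, N i T ω j = 0) ∧
  (∀ i t, t < i → ∀ ω j, N i t ω j = 0)

/-- After-tax terminal wealth `V^α(x,N) = η_T`. -/
def Market.V (M : Market Ω T d) (α x : ℝ) (N : ℕ → ℕ → Ω → Fin d → ℝ) (ω : Ω) : ℝ :=
  etaHist α x (fun t => M.S t ω) (fun t => M.r t ω) (fun i t => N i t ω) T T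

/-- The frictionless (tax-free) wealth process `V^0_t(x,N) = η_t + ⟨∑_{i≤t} N_{i,t}, S_t⟩`,
where `η` is the bank account for tax rate `0`. -/
def Market.V0proc (M : Market Ω T d) (x : ℝ) (N : ℕ → ℕ → Ω → Fin d → ℝ) (t : ℕ) (ω : Ω) : ℝ :=
  etaHist 0 x (fun u => M.S u ω) (fun u => M.r u ω) (fun i u => N i u ω) t t
    + dotp (fun j => ∑ i ∈ Finset.range (t + 1), N i t ω j) (fun j => M.S t ω j)

/-- The no-arbitrage condition for tax rate `α`. -/
def Market.NA (M : Market Ω T d) (α : ℝ) : Prop :=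
  ∀ N, M.IsStrategy N → (∀ᵐ ω ∂M.P, 0 ≤ M.V α 0 N ω) → ∀ᵐ ω ∂M.P, M.V α 0 N ω = 0

/-- The set `{V^α(x,N) : N ∈ 𝒩} - L^0(F_T; ℝ₊)` of attainable after-tax terminal wealths. -/
def Market.Vset (M : Market Ω T d) (α x : ℝ) : Set (Ω → ℝ) :=
  {f | ∃ N, M.IsStrategy N ∧
    ∃ g : Ω → ℝ, Measurable[M.F T] g ∧ (∀ ω, 0 ≤ g ω) ∧ f = fun ω => M.V α x N ω - g ω}

/-- The frictionless wealth recursion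
`V_t = (1+r_t) V_{t-1} + ⟨∑_{i<t} N_{i,t-1}, S_t - (1+r_t) S_{t-1}⟩`. -/
def wealth0 {d : ℕ} (S : ℕ → Fin d → ℝ) (r : ℕ → ℝ) (N : ℕ → ℕ → Fin d → ℝ) (x : ℝ) :
    ℕ → ℝ :=
  Nat.rec (motive := fun _ => ℝ) x (fun t W =>
    (1 + r (t + 1)) * W
      + dotp (fun j => ∑ i ∈ Finset.range (t + 1), N i t j)
          (fun j => S (t + 1) j - (1 + r (t + 1)) * S t j))

/-- Frictionless terminal wealth `V^0(x,N)`. -/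
def Market.V0 (M : Market Ω T d) (x : ℝ) (N : ℕ → ℕ → Ω → Fin d → ℝ) (ω : Ω) : ℝ :=
  wealth0 (fun t => M.S t ω) (fun t => M.r t ω) (fun i t => N i t ω) x T

/-- No-arbitrage for the frictionless model. -/
def Market.NA0 (M : Market Ω T d) : Prop :=
  ∀ N, M.IsStrategy N → (∀ᵐ ω ∂M.P, 0 ≤ M.V0 0 N ω) → ∀ᵐ ω ∂M.P, M.V0 0 N ω = 0

/-- The cone `ℛ_t` of reversible one-period strategies. -/
def Market.RevCone (M : Market Ω T d) (t : ℕ) : Set (Ω → Fin d → ℝ) :=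
  {β | Measurable[M.F t] β ∧ (∀ ω j, 0 ≤ β ω j) ∧
    ∀ᵐ ω ∂M.P, dotp (β ω) (fun j => M.S (t + 1) ω j - (1 + M.r (t + 1) ω) * M.S t ω j) = 0}

/-- `q` is the purely nonreversible part `q_t(β)` of `β`: it is `F_t`-measurable, nonnegative,
`β - q` is reversible, and `q` has minimal Euclidean norm among all such decompositions. -/
def Market.IsQ (M : Market Ω T d) (t : ℕ) (β q : Ω → Fin d → ℝ) : Prop :=
  Measurable[M.F t] q ∧ (∀ ω j, 0 ≤ q ω j) ∧
  (fun ω j => β ω j - q ω j) ∈ M.RevCone t ∧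
  ∀ q' : Ω → Fin d → ℝ, Measurable[M.F t] q' → (∀ ω j, 0 ≤ q' ω j) →
    (fun ω j => β ω j - q' ω j) ∈ M.RevCone t →
    ∀ᵐ ω ∂M.P, eucNorm (q ω) ≤ eucNorm (q' ω)

/-- `β` is purely nonreversible, i.e. `q_t(β) = β`. -/
def Market.PurelyNonRev (M : Market Ω T d) (t : ℕ) (β : Ω → Fin d → ℝ) : Prop :=
  M.IsQ t β β

/-- A reaction function: `R ω a i t` may depend on `ω` only through `F_t` and on the action
history `a` only through the actions up to time `t`; it is nonnegative, nonincreasing in `t`,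
vanishes at and after the horizon `T` and before the purchase date. -/
structure ReactionFun (M : Market Ω T d) where
  R : Ω → (ℕ → ℕ → Fin d → ℝ) → ℕ → ℕ → Fin d → ℝ
  nonneg : ∀ ω a i t j, 0 ≤ R ω a i t j
  adapted_actions : ∀ ω a a' i t, (∀ i' t', t' ≤ t → a i' t' = a' i' t') →
    R ω a i t = R ω a' i t
  meas : ∀ i t, Measurable[(M.F t).prod inferInstance]
    (fun p : Ω × (ℕ → ℕ → Fin d → ℝ) => R p.1 p.2 i t)
  antitone : ∀ ω a i t, i ≤ t → t + 2 ≤ T → ∀ j, R ω a i (t + 1) j ≤ R ω a i t j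
  upper : ∀ ω a i t, T ≤ t → ∀ j, R ω a i t j = 0
  lower : ∀ ω a i t, t < i → ∀ j, R ω a i t j = 0

/-- The strategy `R(N)` produced by a reaction function from a strategy `N`. -/
def ReactionFun.apply {M : Market Ω T d} (Rf : ReactionFun M)
    (N : ℕ → ℕ → Ω → Fin d → ℝ) : ℕ → ℕ → Ω → Fin d → ℝ :=
  fun i t ω => Rf.R ω (fun i' t' => N i' t' ω) i t

/-- `max_{i=0,…,T-1, j=1,…,d} N_{i,i,j}`. -/
def stratMax {Ω : Type*} {d : ℕ} (T : ℕ) (N : ℕ → ℕ → Ω → Fin d → ℝ) (ω : Ω) : ℝ :=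
  ⨆ i ∈ Finset.range T, ⨆ j : Fin d, N i i ω j

/-- A family of random variables is bounded in `L⁰` (bounded in probability). -/
def BoundedInL0 {Ω : Type*} [MeasurableSpace Ω] (P : Measure Ω) (𝒮 : Set (Ω → ℝ)) : Prop :=
  ∀ ε : ℝ, 0 < ε → ∃ C : ℝ, ∀ f ∈ 𝒮, P {ω | C < |f ω|} ≤ ENNReal.ofReal ε

/-- The "no unbounded non-substitutable investment with bounded risk" condition. -/
def Market.NUIBR (M : Market Ω T d) (α : ℝ) : Prop :=
  ∀ x : ℝ, ∃ Rf : ReactionFun M,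
    (∀ N, M.IsStrategy N → M.IsStrategy (Rf.apply N)) ∧
    (∀ N, M.IsStrategy N → ∀ᵐ ω ∂M.P, M.V α x N ω ≤ M.V α x (Rf.apply N) ω) ∧
    ∀ K : ℝ, 0 ≤ K →
      BoundedInL0 M.P (convexHull ℝ
        {f : Ω → ℝ | ∃ N, M.IsStrategy N ∧ (∀ᵐ ω ∂M.P, -K ≤ M.V α x N ω) ∧
          f = stratMax T (Rf.apply N)})

/-- A set of random variables is closed with respect to convergence in probability
(as a subset of `L⁰`, i.e. up to almost-sure equality). -/
def ClosedInProbability {Ω : Type*} [MeasurableSpace Ω] (P : Measure Ω)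
    (𝒮 : Set (Ω → ℝ)) : Prop :=
  ∀ (f : ℕ → Ω → ℝ) (g : Ω → ℝ), (∀ n, f n ∈ 𝒮) →
    TendstoInMeasure P f Filter.atTop g → ∃ g' ∈ 𝒮, g' =ᵐ[P] g


/-- Bank account process for an artificial linear tax rule `τ`:
taxes `Π^{(τ)}_t = α · G_{τ_t}` are paid according to the rule `τ` (with `τ 0 = 0`,
so that `Π^{(τ)}_0 = 0`).  `etaTau α x S r N τ t s` gives `η^{(τ)}_s` for `s ≤ t`. -/
def etaTau {d : ℕ} (α x : ℝ) (S : ℕ → Fin d → ℝ) (r : ℕ → ℝ)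
    (N : ℕ → ℕ → Fin d → ℝ) (τ : ℕ → ℕ) : ℕ → ℕ → ℝ :=
  Nat.rec (motive := fun _ => ℕ → ℝ)
    (fun _ => x - dotp (fun j => N 0 0 j) (fun j => S 0 j))
    (fun t e => fun s =>
      if s ≤ t then e s
      else
        e t + r (t + 1) * e t
          + dotp
              (fun j => (∑ i ∈ Finset.range (t + 1), (N i t j - N i (t + 1) j))
                - N (t + 1) (t + 1) j)
              (fun j => S (t + 1) j)
          - (α * Gaux S r N e (τ (t + 1)) - α * Gaux S r N e (τ t)))

variable {Ω : Type*} [m0 : MeasurableSpace Ω] {T d : ℕ}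

/-- An artificial linear tax rule: an adapted `{0,…,T}`-valued process `τ` with `τ_0 = 0`,
`τ` nondecreasing in `t`, `τ_t ≤ t`, and `τ_{τ_t} = τ_t` whenever `τ_t ≥ 1`. -/
def Market.IsTaxRule (M : Market Ω T d) (τ : ℕ → Ω → ℕ) : Prop :=
  (∀ ω, τ 0 ω = 0) ∧
  (∀ t, Measurable[M.F t] (τ t)) ∧
  (∀ t ω, τ t ω ≤ t) ∧
  (∀ t ω, τ t ω ≤ T) ∧
  (∀ s t, s ≤ t → ∀ ω, τ s ω ≤ τ t ω) ∧
  (∀ t ω, 1 ≤ τ t ω → τ (τ t ω) ω = τ t ω)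

/-- Terminal bank account `η^{(τ)}_T(N)` under the artificial tax rule `τ`. -/
def Market.etaTauT (M : Market Ω T d) (α x : ℝ) (N : ℕ → ℕ → Ω → Fin d → ℝ)
    (τ : ℕ → Ω → ℕ) (ω : Ω) : ℝ :=
  etaTau α x (fun t => M.S t ω) (fun t => M.r t ω) (fun i t => N i t ω) (fun t => τ t ω) T T

/-- A strategy realizes losses: it does not keep shares that trade below their purchase
price. -/
def Market.RealizesLosses (M : Market Ω T d) (N : ℕ → ℕ → Ω → Fin d → ℝ) : Prop :=
  ∀ i t j, i < t → t ≤ T → ∀ᵐ ω ∂M.P, M.S t ω j < M.S i ω j → N i t ω j = 0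

/-- The loss bound `L_t(N) = ((−x) ∨ 0 + ∑_{s<t} ⟨q_s(∑_{i≤s} N_{i,s}), S_s⟩)(1+r̄)^T`,
expressed through a given family `q s` of purely nonreversible parts. -/
def Lfun {Ω : Type*} {d : ℕ} (x rbar : ℝ) (T : ℕ) (S : ℕ → Ω → Fin d → ℝ)
    (q : ℕ → Ω → Fin d → ℝ) (t : ℕ) (ω : Ω) : ℝ :=
  (max (-x) 0 + ∑ s ∈ Finset.range t, dotp (q s ω) (fun j => S s ω j)) * (1 + rbar) ^ T

/-- A stopping time of the filtration `F`. -/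
def IsStoppingTimeFun {Ω : Type*} (F : ℕ → MeasurableSpace Ω) (τ : Ω → ℕ) : Prop :=
  ∀ t : ℕ, MeasurableSet[F t] {ω | τ ω ≤ t}

/-- The family of random variables over which the essential infimum defining `ε_t` is
taken. -/
def Market.epsFamily (M : Market Ω T d) (t : ℕ) : Set (Ω → ENNReal) :=
  {g | ∃ (ε : Ω → ℝ) (A : Set Ω) (N : ℕ → ℕ → Ω → Fin d → ℝ),
    Measurable[M.F t] ε ∧ (∀ ω, ε ω ∈ Set.Icc (0:ℝ) 1) ∧
    MeasurableSet[M.F t] A ∧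
    M.IsStrategy N ∧ (∀ i, i < t → ∀ ω j, N i i ω j = 0) ∧
    M.PurelyNonRev t (fun ω => N t t ω) ∧
    (∀ᵐ ω ∂M.P, eucNorm (N t t ω) = Set.indicator A (fun _ => (1:ℝ)) ω) ∧
    (∀ᵐ ω ∂M.P,
      (M.P[Set.indicator {ω' | M.V0 0 N ω' ≤ - ε ω'} (fun _ => (1:ℝ)) | M.F t]) ω ≤ ε ω) ∧
    g = fun ω => if ω ∈ A then ENNReal.ofReal (ε ω) else (⊤ : ENNReal)}

/-- `e` is the essential infimum of the family `𝒮` of `[0,∞]`-valued random variables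
(with respect to `P`, measurable with respect to `m'`). -/
def IsEssInfOfSet {Ω : Type*} [MeasurableSpace Ω] (m' : MeasurableSpace Ω) (P : Measure Ω)
    (𝒮 : Set (Ω → ENNReal)) (e : Ω → ENNReal) : Prop :=
  Measurable[m'] e ∧ (∀ g ∈ 𝒮, ∀ᵐ ω ∂P, e ω ≤ g ω) ∧
  ∀ e' : Ω → ENNReal, Measurable[m'] e' → (∀ g ∈ 𝒮, ∀ᵐ ω ∂P, e' ω ≤ g ω) →
    ∀ᵐ ω ∂P, e' ω ≤ e ω

/-- The positive part of an extended-real number, as an element of `[0,∞]`. -/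
def erealPos (y : EReal) : ENNReal := if y = ⊤ then ⊤ else ENNReal.ofReal y.toReal

/-- A utility function: `U = -∞` on the negative half-line, real-valued, nondecreasing and
concave on the positive half-line (with real restriction `u`), and continuous from the
right at `0`. -/
structure UtilityFun where
  U : ℝ → EReal
  u : ℝ → ℝ
  neg_bot : ∀ y : ℝ, y < 0 → U y = ⊥
  pos_real : ∀ y : ℝ, 0 < y → U y = (u y : EReal)
  mono : MonotoneOn u (Set.Ioi (0:ℝ))
  concave : ConcaveOn ℝ (Set.Ioi (0:ℝ)) u
  zero_lim : Filter.Tendsto U (nhdsWithin 0 (Set.Ioi (0:ℝ))) (nhds (U 0))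

/-- Expected utility `E[U(X)] = E[U⁺(X)] - E[U⁻(X)]`, with the convention that it equals
`-∞` whenever `E[U⁻(X)] = ∞`. -/
def expUtility {Ω : Type*} [MeasurableSpace Ω] (P : Measure Ω) (Uf : UtilityFun)
    (X : Ω → ℝ) : EReal :=
  if (∫⁻ ω, erealPos (-(Uf.U (X ω))) ∂P) = ⊤ then ⊥
  else ((∫⁻ ω, erealPos (Uf.U (X ω)) ∂P : ENNReal) : EReal)
    - ((∫⁻ ω, erealPos (-(Uf.U (X ω))) ∂P : ENNReal) : EReal)

/-- The value function `u^α(x) = sup_{N ∈ 𝒜^α(x)} E[U(V^α(x,N))]` of the utility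
maximization problem with taxes. -/
def Market.valueFn (M : Market Ω T d) (Uf : UtilityFun) (α x : ℝ) : EReal :=
  ⨆ N ∈ {N : ℕ → ℕ → Ω → Fin d → ℝ |
      M.IsStrategy N ∧ ∀ᵐ ω ∂M.P, 0 ≤ M.V α x N ω},
    expUtility M.P Uf (fun ω => M.V α x N ω)

/-- The value function `u^0(x)` of the frictionless utility maximization problem. -/
def Market.valueFn0 (M : Market Ω T d) (Uf : UtilityFun) (x : ℝ) : EReal :=
  ⨆ N ∈ {N : ℕ → ℕ → Ω → Fin d → ℝ |
      M.IsStrategy N ∧ ∀ᵐ ω ∂M.P, 0 ≤ M.V0 x N ω},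
    expUtility M.P Uf (fun ω => M.V0 x N ω)

/-- The set `{V^α(x,N) : N ∈ 𝒜^α(x)} - L^0(F_T; ℝ₊)`. -/
def Market.VsetNonneg (M : Market Ω T d) (α x : ℝ) : Set (Ω → ℝ) :=
  {f | ∃ N, M.IsStrategy N ∧ (∀ᵐ ω ∂M.P, 0 ≤ M.V α x N ω) ∧
    ∃ g : Ω → ℝ, Measurable[M.F T] g ∧ (∀ ω, 0 ≤ g ω) ∧ f = fun ω => M.V α x N ω - g ω}

/-- The set `{V^0(x,N) : N ∈ 𝒩} - L^0(F_T; ℝ₊)` for the frictionless model. -/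
def Market.V0set (M : Market Ω T d) (x : ℝ) : Set (Ω → ℝ) :=
  {f | ∃ N, M.IsStrategy N ∧
    ∃ g : Ω → ℝ, Measurable[M.F T] g ∧ (∀ ω, 0 ≤ g ω) ∧ f = fun ω => M.V0 x N ω - g ω}

/-- A measurable (set-valued) random set: preimages of open sets are measurable. -/
def MeasRandomSet {Ω : Type*} (m : MeasurableSpace Ω) {d : ℕ}
    (K : Ω → Set (Fin d → ℝ)) : Prop :=
  ∀ O : Set (Fin d → ℝ), IsOpen O → MeasurableSet[m] {ω | (K ω ∩ O).Nonempty}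

/-- The random set `A_t = {β ∈ 𝒫_t : 1 + r_{t+1} + ⟨β, S_{t+1} - (1+r_{t+1})S_t⟩ ≥ 0 a.s.}`. -/
def Market.AtSet (M : Market Ω T d) (t : ℕ) : Set (Ω → Fin d → ℝ) :=
  {β | M.PurelyNonRev t β ∧
    ∀ᵐ ω ∂M.P, 0 ≤ 1 + M.r (t + 1) ω
      + dotp (β ω) (fun j => M.S (t + 1) ω j - (1 + M.r (t + 1) ω) * M.S t ω j)}

/-! Taxes `Π_t = α · max_{u ≤ t} G_u` are nondecreasing in `t`, so the after-tax bank account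
follows the tax-free recursion `η_t = (1 + r_t) η_{t-1} + ⟨trades, S_t⟩` minus nonnegative
payments. As `r ≥ 0` this recursion is monotone in `η_{t-1}`, and the trades do not depend on
`η`, so `η^α_t ≤ η^0_t` by induction. At `T` every position is liquidated, hence
`V^0_T = η^0_T`. -/

lemma etaHist_succ_self {d : ℕ} (α x : ℝ) (S : ℕ → Fin d → ℝ) (r : ℕ → ℝ)
    (N : ℕ → ℕ → Fin d → ℝ) (t : ℕ) :
    etaHist α x S r N (t + 1) (t + 1) =
      etaHist α x S r N t t + r (t + 1) * etaHist α x S r N t t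
        + dotp (fun j => (∑ i ∈ Finset.range (t + 1), (N i t j - N i (t + 1) j))
            - N (t + 1) (t + 1) j) (fun j => S (t + 1) j)
        - (Piaux α S r N (etaHist α x S r N t) (t + 1)
            - Piaux α S r N (etaHist α x S r N t) t) :=
  if_neg (Nat.not_succ_le_self t)

lemma Piaux_le_Piaux_succ {d : ℕ} {α : ℝ} (hα : 0 ≤ α) (S : ℕ → Fin d → ℝ) (r : ℕ → ℝ)
    (N : ℕ → ℕ → Fin d → ℝ) (e : ℕ → ℝ) (t : ℕ) :
    Piaux α S r N e t ≤ Piaux α S r N e (t + 1) :=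
  mul_le_mul_of_nonneg_left
    (Finset.sup'_mono _ (Finset.range_subset_range.2 (Nat.le_succ _)) _) hα

lemma etaHist_le_etaHist_zero {d : ℕ} {α : ℝ} (hα : 0 ≤ α) (x : ℝ) (S : ℕ → Fin d → ℝ)
    {r : ℕ → ℝ} (hr : ∀ t, 0 ≤ r t) (N : ℕ → ℕ → Fin d → ℝ) (t : ℕ) :
    etaHist α x S r N t t ≤ etaHist 0 x S r N t t := by
  induction t with
  | zero => rfl
  | succ t ih =>
    have hgrowth : (1 + r (t + 1)) * etaHist α x S r N t t
        ≤ (1 + r (t + 1)) * etaHist 0 x S r N t t :=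
      mul_le_mul_of_nonneg_left ih (by linarith [hr (t + 1)])
    have htax := Piaux_le_Piaux_succ hα S r N (etaHist α x S r N t) t
    have htax_free : ∀ s, Piaux 0 S r N (etaHist 0 x S r N t) s = 0 := fun _ => zero_mul _
    rw [etaHist_succ_self, etaHist_succ_self, htax_free, htax_free]
    linarith

lemma Market.V0proc_horizon_eq (M : Market Ω T d) (x : ℝ) {N : ℕ → ℕ → Ω → Fin d → ℝ}
    (hliq : ∀ i ω j, N i T ω j = 0) (ω : Ω) :
    M.V0proc x N T ω =
      etaHist 0 x (fun u => M.S u ω) (fun u => M.r u ω) (fun i u => N i u ω) T T := by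
  simp [Market.V0proc, dotp, hliq]

theorem tax_wealth_le_frictionless_wealth_general
    (M : Market Ω T d) (α : ℝ) (hα0 : 0 ≤ α) (x : ℝ)
    (N : ℕ → ℕ → Ω → Fin d → ℝ) (hN : M.IsStrategy N) :
    ∀ᵐ ω ∂M.P, M.V α x N ω ≤ M.V0proc x N T ω :=
  Eventually.of_forall fun ω => by
    rw [M.V0proc_horizon_eq x hN.2.2.2.1 ω]
    exact etaHist_le_etaHist_zero hα0 x _ (fun t => M.r_nonneg t ω) _ T

/-- For a tax rate `α ∈ [0,1)`, an initial capital `x` and a strategy `N`,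
the after-tax terminal wealth never exceeds the frictionless terminal wealth of the same
strategy: `V^α(x,N) ≤ V^0(x,N)` a.s. -/
theorem tax_wealth_le_frictionless_wealth
    (M : Market Ω T d) (α : ℝ) (hα0 : 0 ≤ α) (hα1 : α < 1) (x : ℝ)
    (N : ℕ → ℕ → Ω → Fin d → ℝ) (hN : M.IsStrategy N) :
    ∀ᵐ ω ∂M.P, M.V α x N ω ≤ M.V0proc x N T ω :=
  tax_wealth_le_frictionless_wealth_general M α hα0 x N hN

end
end

section
/- Fix a tax rate α ∈ [0,1). The model with tax rate α satisfies the no-arbitrage (NA) condition if and only if the corresponding tax-free model (tax rate 0) satisfies the NA condition. -/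
open MeasureTheory Filter Finset

noncomputable section
open scoped Classical

variable {Ω : Type*} [m0 : MeasurableSpace Ω] {T d : ℕ}

variable {Ω : Type*} [m0 : MeasurableSpace Ω] {T d : ℕ}

/-!
Taxes are paid out of the bank account and the cumulative tax `Π_t = α max_{u ≤ t} G_u` never
decreases, so an induction on the bank-account recursion gives `V^α(x, N) ≤ V^0(x, N)`; hence
NA without taxes implies NA with taxes.

Conversely, buy `ξ ≥ 0` at time `t` and sell it at `t + 1`. Nothing happens before `t`, the
realized gain at `t + 1` is `g = ⟨ξ, S_{t+1} - (1 + r_{t+1}) S_t⟩`, and afterwards the only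
gains are interest on the bank account. Since each tax payment is at most `α` times the increase
of `G`, the terminal wealth is at least `(1 - α) g` when `g ≥ 0`, so NA with taxes rules out
one-period arbitrages. The frictionless wealth satisfies
`W_{t+1} = (1 + r_{t+1}) W_t + ⟨H_t, S_{t+1} - (1 + r_{t+1}) S_t⟩`, with `H_t` the position held
over `(t, t + 1]`. If `W_T ≥ 0`, trading `H_t` on `{W_t < 0}` would be a one-period arbitrage,
so `W_t ≥ 0` for all `t` (backward induction); then trading `H_t` from `W_t = 0` shows
`W_{t+1} = 0` (forward induction).
-/

lemma dotp_eq_dotProduct (a b : Fin d → ℝ) : dotp a b = a ⬝ᵥ b := rfl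

section BankAccount

variable (α x : ℝ) (S : ℕ → Fin d → ℝ) (r : ℕ → ℝ) (N : ℕ → ℕ → Fin d → ℝ)

/- The paper's `η_t`, `G_t` and `Π_t`: `etaHist α x S r N t` is the history `η_0, …, η_t`,
whose diagonal is `η`. -/
def bankAccount (t : ℕ) : ℝ := etaHist α x S r N t t

def gains (t : ℕ) : ℝ := Gaux S r N (bankAccount α x S r N) t

def taxPaid (t : ℕ) : ℝ := Piaux α S r N (bankAccount α x S r N) t

def holdings (t : ℕ) : Fin d → ℝ := fun j => ∑ i ∈ range (t + 1), N i t j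

/-- Shares sold minus shares bought at time `t + 1`. -/
def netSales (t : ℕ) : Fin d → ℝ :=
  fun j => ∑ i ∈ range (t + 1), (N i t j - N i (t + 1) j) - N (t + 1) (t + 1) j

lemma netSales_add_holdings_succ (t : ℕ) : netSales N t + holdings N (t + 1) = holdings N t := by
  funext j
  simp only [Pi.add_apply, netSales, holdings, sum_range_succ _ (t + 1), sum_sub_distrib]
  ring

lemma etaHist_of_le {t s : ℕ} (h : s ≤ t) :
    etaHist α x S r N t s = bankAccount α x S r N s := by
  induction t with
  | zero => obtain rfl := Nat.le_zero.mp h; rfl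
  | succ t ih =>
    rcases h.lt_or_eq with h | rfl
    · exact (if_pos (Nat.lt_succ_iff.mp h)).trans (ih (Nat.lt_succ_iff.mp h))
    · rfl

variable {S r N} in
lemma Gaux_congr {e e' : ℕ → ℝ} {t : ℕ} (h : ∀ u < t, e u = e' u) :
    Gaux S r N e t = Gaux S r N e' t :=
  sum_congr rfl fun u hu => by rw [h (u - 1) (by grind)]

variable {S r N} in
lemma Piaux_congr {e e' : ℕ → ℝ} {t : ℕ} (h : ∀ u < t, e u = e' u) :
    Piaux α S r N e t = Piaux α S r N e' t := by
  unfold Piaux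
  congr 1
  exact sup'_congr _ rfl fun v hv => Gaux_congr fun u hu => h u (by grind)

lemma bankAccount_zero : bankAccount α x S r N 0 = x - dotp (N 0 0) (S 0) := rfl

lemma bankAccount_succ (t : ℕ) :
    bankAccount α x S r N (t + 1) = (1 + r (t + 1)) * bankAccount α x S r N t
      + dotp (netSales N t) (S (t + 1)) - (taxPaid α x S r N (t + 1) - taxPaid α x S r N t) := by
  have hhist : ∀ u < t + 1, etaHist α x S r N t u = bankAccount α x S r N u :=
    fun u hu => etaHist_of_le α x S r N (Nat.lt_succ_iff.mp hu)
  have hrec : bankAccount α x S r N (t + 1) = bankAccount α x S r N t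
      + r (t + 1) * bankAccount α x S r N t + dotp (netSales N t) (S (t + 1))
      - (Piaux α S r N (etaHist α x S r N t) (t + 1) - Piaux α S r N (etaHist α x S r N t) t) :=
    if_neg (Nat.not_succ_le_self t)
  rw [hrec, Piaux_congr α hhist, Piaux_congr α fun u hu => hhist u (by omega)]
  simp only [taxPaid]
  ring

lemma gains_succ (t : ℕ) :
    gains α x S r N (t + 1) = gains α x S r N t + bankAccount α x S r N t * r (t + 1)
      + ∑ i ∈ range (t + 1),
          dotp (fun j => N i t j - N i (t + 1) j) (fun j => S (t + 1) j - S i j) := by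
  rw [gains, gains, Gaux, Gaux, sum_Icc_succ_top (by omega)]
  simp only [add_tsub_cancel_right]
  ring

lemma taxPaid_zero_rate (t : ℕ) : taxPaid 0 x S r N t = 0 := zero_mul _

variable {α}

lemma taxPaid_le_succ (hα : 0 ≤ α) (t : ℕ) :
    taxPaid α x S r N t ≤ taxPaid α x S r N (t + 1) :=
  mul_le_mul_of_nonneg_left (sup'_mono _ (range_subset_range.2 (by omega)) _) hα

lemma taxPaid_succ_sub_le (hα : 0 ≤ α) (t : ℕ) :
    taxPaid α x S r N (t + 1) - taxPaid α x S r N t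
      ≤ α * max 0 (gains α x S r N (t + 1) - gains α x S r N t) := by
  set G := gains α x S r N
  set A := (range (t + 1)).sup' nonempty_range_add_one G
  have hmax : (range (t + 1 + 1)).sup' nonempty_range_add_one G
      ≤ A + max 0 (G (t + 1) - G t) := by
    refine sup'_le _ _ fun v hv => ?_
    rcases Nat.lt_succ_iff_lt_or_eq.mp (mem_range.mp hv) with hv | rfl
    · linarith [le_sup' G (mem_range.mpr hv), le_max_left 0 (G (t + 1) - G t)]
    · linarith [le_sup' G (self_mem_range_succ t), le_max_right 0 (G (t + 1) - G t)]
  change α * (range (t + 1 + 1)).sup' _ G - α * A ≤ _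
  nlinarith [mul_le_mul_of_nonneg_left hmax hα]

lemma taxPaid_succ_sub_eq_zero (hα : 0 ≤ α) {t : ℕ}
    (h : gains α x S r N (t + 1) ≤ gains α x S r N t) :
    taxPaid α x S r N (t + 1) - taxPaid α x S r N t = 0 := by
  have hle := taxPaid_succ_sub_le x S r N hα t
  rw [max_eq_left (by linarith), mul_zero] at hle
  linarith [taxPaid_le_succ x S r N hα t]

variable {r} in
lemma bankAccount_le_bankAccount_zero_rate (hα : 0 ≤ α) (hr : ∀ u, 0 ≤ r u) (t : ℕ) :
    bankAccount α x S r N t ≤ bankAccount 0 x S r N t := by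
  induction t with
  | zero => rfl
  | succ t ih =>
    rw [bankAccount_succ, bankAccount_succ, taxPaid_zero_rate, taxPaid_zero_rate]
    nlinarith [mul_le_mul_of_nonneg_left ih (hr (t + 1)), taxPaid_le_succ x S r N hα t]

end BankAccount

section SinglePeriod

def excessGain (S : ℕ → Fin d → ℝ) (r : ℕ → ℝ) (t : ℕ) : Fin d → ℝ :=
  S (t + 1) - (1 + r (t + 1)) • S t

lemma dotp_excessGain (ξ : Fin d → ℝ) (S : ℕ → Fin d → ℝ) (r : ℕ → ℝ) (t : ℕ) :
    dotp ξ (excessGain S r t) = dotp ξ (S (t + 1)) - (1 + r (t + 1)) * dotp ξ (S t) := by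
  simp only [excessGain, dotp_eq_dotProduct, dotProduct_sub, dotProduct_smul, smul_eq_mul]

variable (ξ : Fin d → ℝ) (t : ℕ)

/-- Buy `ξ` at time `t` and sell it at time `t + 1`. -/
def singlePeriod : ℕ → ℕ → Fin d → ℝ := fun i s => if i = t ∧ s = t then ξ else 0

lemma netSales_singlePeriod (s : ℕ) :
    netSales (singlePeriod ξ t) s = (if s = t then ξ else 0) - (if s + 1 = t then ξ else 0) := by
  ext j
  by_cases h : s = t
  · subst h
    rw [netSales, sum_eq_single_of_mem s (self_mem_range_succ s) fun i _ hi => by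
      simp [singlePeriod, hi]]
    simp [singlePeriod]
  · rw [netSales, sum_eq_zero fun i hi => by
      have : ¬(i = t ∧ s + 1 = t) := by grind
      simp [singlePeriod, h, this]]
    simp [singlePeriod, h]

lemma realizedGain_singlePeriod (S : ℕ → Fin d → ℝ) (s : ℕ) :
    ∑ i ∈ range (s + 1), dotp (fun j => singlePeriod ξ t i s j - singlePeriod ξ t i (s + 1) j)
        (fun j => S (s + 1) j - S i j)
      = if s = t then dotp ξ (S (t + 1) - S t) else 0 := by
  by_cases h : s = t
  · subst h
    rw [sum_eq_single_of_mem s (self_mem_range_succ s) fun i _ hi => by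
      simp [singlePeriod, hi, dotp]]
    simp [singlePeriod]
    rfl
  · rw [sum_eq_zero fun i hi => by
      have : ¬(i = t ∧ s + 1 = t) := by grind
      simp [singlePeriod, h, this, dotp]]
    simp [h]

variable {α : ℝ} (S : ℕ → Fin d → ℝ) (r : ℕ → ℝ)

lemma bankAccount_singlePeriod_of_lt (hα : 0 ≤ α) {s : ℕ} (hs : s < t) :
    bankAccount α 0 S r (singlePeriod ξ t) s = 0 := by
  induction s with
  | zero => simp [bankAccount_zero, singlePeriod, hs.ne, dotp]
  | succ s ih =>
    have ih := ih (by omega)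
    have htax := taxPaid_succ_sub_eq_zero 0 S r (singlePeriod ξ t) hα (t := s) (by
      rw [gains_succ, realizedGain_singlePeriod, if_neg (by omega), ih]
      simp)
    rw [bankAccount_succ, netSales_singlePeriod, htax, ih, if_neg (by omega), if_neg (by omega)]
    simp [dotp]

lemma bankAccount_singlePeriod_self (hα : 0 ≤ α) :
    bankAccount α 0 S r (singlePeriod ξ t) t = -dotp ξ (S t) := by
  cases t with
  | zero => simp [bankAccount_zero, singlePeriod]
  | succ s =>
    have hs := bankAccount_singlePeriod_of_lt ξ (s + 1) S r hα (Nat.lt_succ_self s)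
    have htax := taxPaid_succ_sub_eq_zero 0 S r (singlePeriod ξ (s + 1)) hα (t := s) (by
      rw [gains_succ, realizedGain_singlePeriod, if_neg (by omega), hs]
      simp)
    rw [bankAccount_succ, netSales_singlePeriod, htax, hs, if_neg (by omega), if_pos rfl]
    simp [dotp]

lemma bankAccount_singlePeriod_succ (hα : 0 ≤ α) :
    dotp ξ (excessGain S r t) - α * max 0 (dotp ξ (excessGain S r t))
      ≤ bankAccount α 0 S r (singlePeriod ξ t) (t + 1) := by
  have hG : gains α 0 S r (singlePeriod ξ t) (t + 1) - gains α 0 S r (singlePeriod ξ t) t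
      = dotp ξ (excessGain S r t) := by
    rw [gains_succ, realizedGain_singlePeriod, if_pos rfl, bankAccount_singlePeriod_self ξ t S r hα,
      dotp_excessGain, dotp_eq_dotProduct, dotp_eq_dotProduct, dotp_eq_dotProduct, dotProduct_sub]
    ring
  have htax := taxPaid_succ_sub_le 0 S r (singlePeriod ξ t) hα t
  rw [hG] at htax
  rw [bankAccount_succ, netSales_singlePeriod, bankAccount_singlePeriod_self ξ t S r hα, if_pos rfl,
    if_neg (by omega), sub_zero]
  rw [dotp_excessGain] at *
  linarith

lemma bankAccount_singlePeriod_ge (hα0 : 0 ≤ α) (hα1 : α ≤ 1) (hr : ∀ u, 0 ≤ r u)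
    (hg : 0 ≤ dotp ξ (excessGain S r t)) {u : ℕ} (hu : t < u) :
    (1 - α) * dotp ξ (excessGain S r t) ≤ bankAccount α 0 S r (singlePeriod ξ t) u := by
  induction u, hu using Nat.le_induction with
  | base =>
    have := bankAccount_singlePeriod_succ ξ t S r hα0
    rw [max_eq_right hg] at this
    linarith
  | succ u hu ih =>
    have hη : 0 ≤ bankAccount α 0 S r (singlePeriod ξ t) u := (mul_nonneg (by linarith) hg).trans ih
    have hG : gains α 0 S r (singlePeriod ξ t) (u + 1) - gains α 0 S r (singlePeriod ξ t) u
        = bankAccount α 0 S r (singlePeriod ξ t) u * r (u + 1) := by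
      rw [gains_succ, realizedGain_singlePeriod, if_neg (by omega)]
      ring
    have htax := taxPaid_succ_sub_le 0 S r (singlePeriod ξ t) hα0 u
    rw [hG, max_eq_right (mul_nonneg hη (hr _))] at htax
    rw [bankAccount_succ, netSales_singlePeriod, if_neg (by omega), if_neg (by omega), sub_zero]
    simp only [dotp_eq_dotProduct, zero_dotProduct] at ih ⊢
    nlinarith [mul_nonneg (mul_nonneg hη (hr (u + 1))) (sub_nonneg.mpr hα1)]

end SinglePeriod

lemma Measurable.dotp {Ω : Type*} {m : MeasurableSpace Ω} {a b : Ω → Fin d → ℝ}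
    (ha : Measurable[m] a) (hb : Measurable[m] b) : Measurable[m] fun ω => dotp (a ω) (b ω) :=
  Finset.measurable_sum _ fun j _ =>
    ((measurable_pi_apply j).comp ha).mul ((measurable_pi_apply j).comp hb)

namespace Market

variable (M : Market Ω T d)

def onePeriodGain (t : ℕ) (ξ : Ω → Fin d → ℝ) (ω : Ω) : ℝ :=
  dotp (ξ ω) (excessGain (M.S · ω) (M.r · ω) t)

def NoOnePeriodArbitrage (t : ℕ) : Prop :=
  ∀ ξ : Ω → Fin d → ℝ, Measurable[M.F t] ξ → (∀ ω j, 0 ≤ ξ ω j) →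
    (∀ᵐ ω ∂M.P, 0 ≤ M.onePeriodGain t ξ ω) → ∀ᵐ ω ∂M.P, M.onePeriodGain t ξ ω = 0

variable {M}

lemma NA_of_NA_zero {α : ℝ} (hα : 0 ≤ α) (h : M.NA 0) : M.NA α := by
  intro N hN hV
  have hle : ∀ ω, M.V α 0 N ω ≤ M.V 0 0 N ω := fun ω =>
    bankAccount_le_bankAccount_zero_rate _ _ _ hα (fun u => M.r_nonneg u ω) T
  filter_upwards [hV, h N hN (hV.mono fun ω hω => hω.trans (hle ω))] with ω hω h0
  exact le_antisymm ((hle ω).trans_eq h0) hω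

lemma isStrategy_singlePeriod {t : ℕ} (ht : t < T) {ξ : Ω → Fin d → ℝ}
    (hξ : Measurable[M.F t] ξ) (hξ0 : ∀ ω j, 0 ≤ ξ ω j) :
    M.IsStrategy fun i s ω => singlePeriod (ξ ω) t i s := by
  refine ⟨fun i s => ?_, fun i s ω j => ?_, fun i s _ _ ω j => ?_, fun i ω j => ?_,
    fun i s hs ω j => ?_⟩
  · by_cases h : i = t ∧ s = t
    · obtain ⟨rfl, rfl⟩ := h
      simpa [singlePeriod] using hξ
    · simp [singlePeriod, h, measurable_const]
  · by_cases h : i = t ∧ s = t <;> simp [singlePeriod, h, hξ0]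
  · have : ¬(i = t ∧ s + 1 = t) := by omega
    by_cases h : i = t ∧ s = t <;> simp [singlePeriod, h, this, hξ0]
  · simp [singlePeriod, ht.ne']
  · simp [singlePeriod, show ¬(i = t ∧ s = t) by omega]

lemma noOnePeriodArbitrage_of_NA {α : ℝ} (hα0 : 0 ≤ α) (hα1 : α < 1) (hNA : M.NA α)
    {t : ℕ} (ht : t < T) : M.NoOnePeriodArbitrage t := by
  intro ξ hξ hξ0 hgain
  have hV : ∀ᵐ ω ∂M.P, (1 - α) * M.onePeriodGain t ξ ω
      ≤ M.V α 0 (fun i s ω => singlePeriod (ξ ω) t i s) ω := by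
    filter_upwards [hgain] with ω hω
    exact bankAccount_singlePeriod_ge _ _ _ _ hα0 hα1.le (fun u => M.r_nonneg u ω) hω ht
  have hV0 := hNA _ (M.isStrategy_singlePeriod ht hξ hξ0) <| by
    filter_upwards [hV, hgain] with ω hω hg
    exact (mul_nonneg (by linarith) hg).trans hω
  filter_upwards [hV, hV0, hgain] with ω hω h0 hg
  nlinarith

section WealthRecursion

variable {W : ℕ → Ω → ℝ} {H : ℕ → Ω → Fin d → ℝ} {t : ℕ}

lemma ae_nonneg_of_ae_nonneg_succ (hNA : M.NoOnePeriodArbitrage t)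
    (hH : Measurable[M.F t] (H t)) (hH0 : ∀ ω j, 0 ≤ H t ω j) (hW : Measurable[M.F t] (W t))
    (hrec : ∀ ω, W (t + 1) ω = (1 + M.r (t + 1) ω) * W t ω + M.onePeriodGain t (H t) ω)
    (hsucc : ∀ᵐ ω ∂M.P, 0 ≤ W (t + 1) ω) : ∀ᵐ ω ∂M.P, 0 ≤ W t ω := by
  set A := {ω | W t ω < 0}
  have hgain : ∀ ω, M.onePeriodGain t (A.indicator (H t)) ω
      = A.indicator (M.onePeriodGain t (H t)) ω := by
    intro ω
    by_cases hω : ω ∈ A <;> simp [onePeriodGain, hω, dotp]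
  have hpos : ∀ᵐ ω ∂M.P, ω ∈ A → 0 < M.onePeriodGain t (H t) ω := by
    filter_upwards [hsucc] with ω hω hA
    nlinarith [hrec ω, M.r_nonneg (t + 1) ω, show W t ω < 0 from hA]
  have hzero := hNA (A.indicator (H t)) (hH.indicator (measurableSet_lt hW measurable_const))
    (fun ω j => by by_cases hω : ω ∈ A <;> simp [hω, hH0]) <| by
      filter_upwards [hpos] with ω hω
      rw [hgain]
      by_cases hA : ω ∈ A
      · simpa [hA] using (hω hA).le
      · simp [hA]
  filter_upwards [hzero, hpos] with ω h0 hω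
  by_contra hA
  have hA : ω ∈ A := lt_of_not_ge hA
  rw [hgain, Set.indicator_of_mem hA] at h0
  exact (hω hA).ne' h0

lemma ae_eq_zero_succ_of_ae_eq_zero (hNA : M.NoOnePeriodArbitrage t)
    (hH : Measurable[M.F t] (H t)) (hH0 : ∀ ω j, 0 ≤ H t ω j)
    (hrec : ∀ ω, W (t + 1) ω = (1 + M.r (t + 1) ω) * W t ω + M.onePeriodGain t (H t) ω)
    (hzero : ∀ᵐ ω ∂M.P, W t ω = 0) (hsucc : ∀ᵐ ω ∂M.P, 0 ≤ W (t + 1) ω) :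
    ∀ᵐ ω ∂M.P, W (t + 1) ω = 0 := by
  have hgain : ∀ᵐ ω ∂M.P, M.onePeriodGain t (H t) ω = W (t + 1) ω := by
    filter_upwards [hzero] with ω hω
    rw [hrec ω, hω]
    ring
  filter_upwards [hNA (H t) hH hH0 (by filter_upwards [hgain, hsucc] with ω h h'; rwa [h]),
    hgain] with ω h h'
  rwa [← h']

lemma ae_eq_zero_of_noOnePeriodArbitrage (hNA : ∀ t < T, M.NoOnePeriodArbitrage t)
    (hH : ∀ t, Measurable[M.F t] (H t)) (hH0 : ∀ t ω j, 0 ≤ H t ω j)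
    (hW : ∀ t, Measurable[M.F t] (W t))
    (hrec : ∀ t ω, W (t + 1) ω = (1 + M.r (t + 1) ω) * W t ω + M.onePeriodGain t (H t) ω)
    (h0 : ∀ ω, W 0 ω = 0) (hT : ∀ᵐ ω ∂M.P, 0 ≤ W T ω) : ∀ᵐ ω ∂M.P, W T ω = 0 := by
  have hnonneg : ∀ t ≤ T, ∀ᵐ ω ∂M.P, 0 ≤ W t ω := fun t ht =>
    Nat.decreasingInduction (motive := fun t _ => ∀ᵐ ω ∂M.P, 0 ≤ W t ω)
      (fun k hk ih => M.ae_nonneg_of_ae_nonneg_succ (hNA k hk) (hH k) (hH0 k) (hW k) (hrec k) ih)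
      hT ht
  have hzero : ∀ t ≤ T, ∀ᵐ ω ∂M.P, W t ω = 0 := by
    intro t ht
    induction t with
    | zero => exact .of_forall h0
    | succ t ih =>
      exact M.ae_eq_zero_succ_of_ae_eq_zero (hNA t ht) (hH t) (hH0 t) (hrec t) (ih (by omega))
        (hnonneg _ ht)
  exact hzero T le_rfl

end WealthRecursion

lemma V0proc_def (x : ℝ) (N : ℕ → ℕ → Ω → Fin d → ℝ) (t : ℕ) (ω : Ω) :
    M.V0proc x N t ω = bankAccount 0 x (M.S · ω) (M.r · ω) (N · · ω) t
      + dotp (holdings (N · · ω) t) (M.S t ω) := rfl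

lemma V0proc_zero (x : ℝ) (N : ℕ → ℕ → Ω → Fin d → ℝ) (ω : Ω) : M.V0proc x N 0 ω = x := by
  rw [V0proc_def, bankAccount_zero]
  unfold holdings
  simp

lemma V0proc_succ (x : ℝ) (N : ℕ → ℕ → Ω → Fin d → ℝ) (t : ℕ) (ω : Ω) :
    M.V0proc x N (t + 1) ω = (1 + M.r (t + 1) ω) * M.V0proc x N t ω
      + M.onePeriodGain t (fun ω => holdings (N · · ω) t) ω := by
  rw [V0proc_def, V0proc_def, bankAccount_succ, taxPaid_zero_rate, taxPaid_zero_rate,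
    onePeriodGain, dotp_excessGain, ← netSales_add_holdings_succ _ t]
  simp only [dotp_eq_dotProduct, add_dotProduct]
  ring

lemma V0proc_horizon {N : ℕ → ℕ → Ω → Fin d → ℝ} (hN : M.IsStrategy N) (x : ℝ) (ω : Ω) :
    M.V0proc x N T ω = M.V 0 x N ω := by
  simp [V0proc_def, holdings, hN.2.2.2.1, dotp]
  rfl

lemma measurable_holdings {N : ℕ → ℕ → Ω → Fin d → ℝ} (hN : M.IsStrategy N) (t : ℕ) :
    Measurable[M.F t] fun ω => holdings (N · · ω) t :=
  @measurable_pi_lambda Ω (Fin d) (fun _ => ℝ) (M.F t) _ _ fun j =>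
    Finset.measurable_sum _ fun i _ => (measurable_pi_apply j).comp (hN.1 i t)

lemma measurable_netSales {N : ℕ → ℕ → Ω → Fin d → ℝ} (hN : M.IsStrategy N) (t : ℕ) :
    Measurable[M.F (t + 1)] fun ω => netSales (N · · ω) t := by
  have hN' : ∀ i s j, Measurable[M.F s] fun ω => N i s ω j := fun i s j =>
    (measurable_pi_apply j).comp (hN.1 i s)
  exact @measurable_pi_lambda Ω (Fin d) (fun _ => ℝ) (M.F (t + 1)) _ _ fun j =>
    (Finset.measurable_sum _ fun i _ =>
      ((hN' i t j).mono (M.F_mono t.le_succ) le_rfl).sub (hN' i (t + 1) j)).sub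
        (hN' (t + 1) (t + 1) j)

lemma measurable_V0proc {N : ℕ → ℕ → Ω → Fin d → ℝ} (hN : M.IsStrategy N) (x : ℝ) (t : ℕ) :
    Measurable[M.F t] (M.V0proc x N t) := by
  have hbank : Measurable[M.F t] fun ω => bankAccount 0 x (M.S · ω) (M.r · ω) (N · · ω) t := by
    induction t with
    | zero => exact measurable_const.sub ((hN.1 0 0).dotp (M.S_adapted 0))
    | succ t ih =>
      simp only [bankAccount_succ, taxPaid_zero_rate, sub_zero]
      exact ((measurable_const.add (M.r_adapted _)).mul (ih.mono (M.F_mono t.le_succ) le_rfl)).add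
        ((measurable_netSales hN t).dotp (M.S_adapted _))
  exact hbank.add ((measurable_holdings hN t).dotp (M.S_adapted t))

lemma NA_zero_of_noOnePeriodArbitrage (h : ∀ t < T, M.NoOnePeriodArbitrage t) : M.NA 0 := by
  intro N hN hV
  simp only [← M.V0proc_horizon hN] at hV ⊢
  exact M.ae_eq_zero_of_noOnePeriodArbitrage h (measurable_holdings hN)
    (fun t ω j => sum_nonneg fun i _ => hN.2.1 i t ω j) (M.measurable_V0proc hN 0)
    (M.V0proc_succ 0 N) (M.V0proc_zero 0 N) hV

end Market

/-- The model with tax rate `α ∈ [0,1)` satisfies the no-arbitrage condition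
if and only if the corresponding tax-free model (`α = 0`) does. -/
theorem NA_iff_NA_taxfree
    (M : Market Ω T d) (α : ℝ) (hα0 : 0 ≤ α) (hα1 : α < 1) :
    M.NA α ↔ M.NA 0 :=
  ⟨fun h => M.NA_zero_of_noOnePeriodArbitrage fun _ ht => M.noOnePeriodArbitrage_of_NA hα0 hα1 h ht,
    M.NA_of_NA_zero hα0⟩

end
end
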